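/- Let T be a quantum channel on L(ℂ^d) and ρ a density operator on ℂ^d ⊗ ℂ^d. Then ‖(Θ ⊗ id)((id − T) ⊗ id)(ρ)‖₁ ≤ (d/√2) ‖((id − T) ⊗ id)(ρ)‖₁, where Θ is transposition on the first factor. -/

import Mathlib

open Matrix Kronecker BigOperators
open scoped ComplexOrder

/-- The former `Matrix.PosSemidef.sqrt` (removed from Mathlib), with its old definition. -/
noncomputable def posSemidefSqrt {n : Type*} [Fintype n] [DecidableEq n] {A : Matrix n n ℂ}
    (hA : A.PosSemidef) : Matrix n n ℂ :=
  hA.1.eigenvectorUnitary.1 * diagonal ((↑) ∘ (√·) ∘ hA.1.eigenvalues) *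
    (star hA.1.eigenvectorUnitary : Matrix n n ℂ)

noncomputable def traceNorm {n : Type*} [Fintype n] [DecidableEq n] (X : Matrix n n ℂ) : ℝ :=
  ((posSemidefSqrt (Matrix.posSemidef_conjTranspose_mul_self X)).trace).re

noncomputable def hsNorm {n : Type*} [Fintype n] (X : Matrix n n ℂ) : ℝ :=
  Real.sqrt ((Xᴴ * X).trace.re)

noncomputable def singularValues {n : Type*} [Fintype n] [DecidableEq n] (Y : Matrix n n ℂ) :
    n → ℝ :=
  fun i => Real.sqrt ((Matrix.posSemidef_conjTranspose_mul_self Y).1.eigenvalues i)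

/-- Partial transpose on the first tensor factor. -/
def ptransp {d k : ℕ} (X : Matrix (Fin d × Fin k) (Fin d × Fin k) ℂ) :
    Matrix (Fin d × Fin k) (Fin d × Fin k) ℂ :=
  fun p q => X (q.1, p.2) (p.1, q.2)

/-- Partial trace over the first tensor factor. -/
noncomputable def ptraceH {d k : ℕ} (X : Matrix (Fin d × Fin k) (Fin d × Fin k) ℂ) :
    Matrix (Fin k) (Fin k) ℂ :=
  fun j j' => ∑ i, X (i, j) (i, j')

def vec {d : ℕ} (A : Matrix (Fin d) (Fin d) ℂ) : Fin d × Fin d → ℂ := fun p => A p.1 p.2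

/-- Outer product |v⟩⟨w|. -/
def outer {n : Type*} (v w : n → ℂ) : Matrix n n ℂ := fun i j => v i * star (w j)

/-- The swap operator F(e_i ⊗ e_j) = e_j ⊗ e_i. -/
def swapOp (d : ℕ) : Matrix (Fin d × Fin d) (Fin d × Fin d) ℂ :=
  fun p q => if p.1 = q.2 ∧ p.2 = q.1 then 1 else 0

/-- Blockwise action of Φ ⊗ id on operators on H ⊗ K. -/
def tensorExt {d k : ℕ} (Φ : Matrix (Fin d) (Fin d) ℂ → Matrix (Fin d) (Fin d) ℂ)
    (Z : Matrix (Fin d × Fin k) (Fin d × Fin k) ℂ) :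
    Matrix (Fin d × Fin k) (Fin d × Fin k) ℂ :=
  fun p q => Φ (fun a b => Z (a, p.2) (b, q.2)) p.1 q.1

/-- Diamond norm (stabilized at ancilla dimension d). -/
noncomputable def diamondNorm {d : ℕ}
    (Φ : Matrix (Fin d) (Fin d) ℂ → Matrix (Fin d) (Fin d) ℂ) : ℝ :=
  ⨆ ρ : {ρ : Matrix (Fin d × Fin d) (Fin d × Fin d) ℂ // ρ.PosSemidef ∧ ρ.trace = 1},
    traceNorm (tensorExt Φ ρ.1)

/-!
The difference `Δ = ρ - (T ⊗ id) ρ` is Hermitian and traceless. The partial transpose only permutes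
matrix entries, so it preserves the Hilbert–Schmidt norm, and on a space of dimension `d²`
Cauchy–Schwarz on the singular values gives `‖·‖₁ ≤ d ‖·‖₂`. Finally, the eigenvalues of `Δ` sum to
zero, so each one is at most `‖Δ‖₁ / 2` in absolute value, whence `‖Δ‖₂² ≤ ‖Δ‖₁² / 2`.
-/

theorem sum_sq_le_sq_sum_abs_div_two_of_sum_eq_zero {ι : Type*} {s : Finset ι} {f : ι → ℝ}
    (h0 : ∑ i ∈ s, f i = 0) :
    ∑ i ∈ s, f i ^ 2 ≤ (∑ i ∈ s, |f i|) ^ 2 / 2 := by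
  classical
  have hhalf : ∀ j ∈ s, 2 * |f j| ≤ ∑ i ∈ s, |f i| := by
    intro j hj
    have hrest : f j = -∑ i ∈ s.erase j, f i := by linarith [Finset.add_sum_erase s f hj]
    rw [← Finset.add_sum_erase s _ hj, two_mul, add_le_add_iff_left, hrest, abs_neg]
    exact Finset.abs_sum_le_sum_abs f _
  calc ∑ i ∈ s, f i ^ 2 = ∑ i ∈ s, |f i| * |f i| := by simp only [abs_mul_abs_self, sq]
    _ ≤ ∑ i ∈ s, |f i| * ((∑ i ∈ s, |f i|) / 2) :=
        Finset.sum_le_sum fun i hi =>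
          mul_le_mul_of_nonneg_left (by linarith [hhalf i hi]) (abs_nonneg _)
    _ = (∑ i ∈ s, |f i|) ^ 2 / 2 := by rw [← Finset.sum_mul]; ring

namespace Matrix

theorem trace_sum_mul_mul_conjTranspose {ι n R : Type*} [Fintype ι] [Fintype n] [DecidableEq n]
    [CommSemiring R] [StarRing R] (E : ι → Matrix n n R) (hE : ∑ i, (E i)ᴴ * E i = 1)
    (X : Matrix n n R) :
    (∑ i, E i * X * (E i)ᴴ).trace = X.trace := by
  simp_rw [trace_sum, trace_mul_cycle _ X, ← trace_sum, ← Finset.sum_mul, hE, one_mul]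

theorem sum_mul_conjTranspose_mul_conjTranspose {ι n R : Type*} [Fintype ι] [Fintype n]
    [Semiring R] [StarRing R] (E : ι → Matrix n n R) (X : Matrix n n R) :
    ∑ i, E i * Xᴴ * (E i)ᴴ = (∑ i, E i * X * (E i)ᴴ)ᴴ := by
  simp [conjTranspose_sum, conjTranspose_mul, Matrix.mul_assoc]

theorem IsHermitian.trace_cfc {𝕜 n : Type*} [RCLike 𝕜] [Fintype n] [DecidableEq n]
    {A : Matrix n n 𝕜} (hA : A.IsHermitian) (f : ℝ → ℝ) :
    (cfc f A).trace = ∑ i, (f (hA.eigenvalues i) : 𝕜) := by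
  rw [hA.cfc_eq, IsHermitian.cfc, Unitary.conjStarAlgAut_apply, trace_mul_cycle,
    UnitaryGroup.star_mul_self, one_mul, trace_diagonal]
  rfl

theorem IsHermitian.conjTranspose_mul_self_eq_cfc_sq {𝕜 n : Type*} [RCLike 𝕜] [Fintype n]
    [DecidableEq n] {A : Matrix n n 𝕜} (hA : A.IsHermitian) : Aᴴ * A = cfc (· ^ 2 : ℝ → ℝ) A := by
  rw [cfc_pow_id A 2 hA.isSelfAdjoint, hA.eq, sq]

end Matrix

section Norms

variable {n : Type*} [Fintype n] [DecidableEq n]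

theorem posSemidefSqrt_eq_cfc {A : Matrix n n ℂ} (hA : A.PosSemidef) :
    posSemidefSqrt hA = cfc Real.sqrt A := by
  rw [hA.1.cfc_eq]
  rfl

theorem traceNorm_eq_sum_sqrt_eigenvalues (X : Matrix n n ℂ) :
    traceNorm X = ∑ i, √((posSemidef_conjTranspose_mul_self X).1.eigenvalues i) := by
  rw [traceNorm, posSemidefSqrt_eq_cfc, (posSemidef_conjTranspose_mul_self X).1.trace_cfc]
  simp

theorem hsNorm_eq_sqrt_sum_eigenvalues (X : Matrix n n ℂ) :
    hsNorm X = √(∑ i, (posSemidef_conjTranspose_mul_self X).1.eigenvalues i) := by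
  rw [hsNorm, (posSemidef_conjTranspose_mul_self X).1.trace_eq_sum_eigenvalues]
  simp

theorem traceNorm_le_sqrt_card_mul_hsNorm (X : Matrix n n ℂ) :
    traceNorm X ≤ √(Fintype.card n) * hsNorm X := by
  set μ := (posSemidef_conjTranspose_mul_self X).1.eigenvalues
  have hμ : ∀ i, 0 ≤ μ i := (posSemidef_conjTranspose_mul_self X).eigenvalues_nonneg
  rw [traceNorm_eq_sum_sqrt_eigenvalues, hsNorm_eq_sqrt_sum_eigenvalues,
    ← Real.sqrt_mul (Nat.cast_nonneg _)]
  refine Real.le_sqrt_of_sq_le ?_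
  calc (∑ i, √(μ i)) ^ 2 ≤ Fintype.card n * ∑ i, √(μ i) ^ 2 := sq_sum_le_card_mul_sum_sq
    _ = Fintype.card n * ∑ i, μ i := by simp only [Real.sq_sqrt (hμ _)]

theorem Matrix.IsHermitian.traceNorm_eq_sum_abs_eigenvalues {A : Matrix n n ℂ}
    (hA : A.IsHermitian) : traceNorm A = ∑ i, |hA.eigenvalues i| := by
  rw [traceNorm, posSemidefSqrt_eq_cfc, hA.conjTranspose_mul_self_eq_cfc_sq,
    ← cfc_comp' Real.sqrt (· ^ 2) A, hA.trace_cfc]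
  simp [Real.sqrt_sq_eq_abs]

theorem Matrix.IsHermitian.hsNorm_eq_sqrt_sum_sq_eigenvalues {A : Matrix n n ℂ}
    (hA : A.IsHermitian) : hsNorm A = √(∑ i, hA.eigenvalues i ^ 2) := by
  rw [hsNorm, hA.conjTranspose_mul_self_eq_cfc_sq, hA.trace_cfc, Complex.re_sum]
  rfl

theorem Matrix.IsHermitian.hsNorm_le_traceNorm_div_sqrt_two {A : Matrix n n ℂ}
    (hA : A.IsHermitian) (htr : A.trace = 0) : hsNorm A ≤ traceNorm A / √2 := by
  have hsum : ∑ i, hA.eigenvalues i = 0 := by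
    rwa [hA.trace_eq_sum_eigenvalues, ← RCLike.ofReal_sum, RCLike.ofReal_eq_zero] at htr
  rw [hA.hsNorm_eq_sqrt_sum_sq_eigenvalues, hA.traceNorm_eq_sum_abs_eigenvalues,
    ← Real.sqrt_sq (Finset.sum_nonneg fun i _ => abs_nonneg (hA.eigenvalues i)),
    ← Real.sqrt_div' _ zero_le_two]
  exact Real.sqrt_le_sqrt (sum_sq_le_sq_sum_abs_div_two_of_sum_eq_zero hsum)

end Norms

theorem hsNorm_ptransp {d k : ℕ} (X : Matrix (Fin d × Fin k) (Fin d × Fin k) ℂ) :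
    hsNorm (ptransp X) = hsNorm X := by
  rw [hsNorm, hsNorm, ← Matrix.star_vec_dotProduct_vec, ← Matrix.star_vec_dotProduct_vec]
  congr 2
  exact Fintype.sum_bijective (fun x => ((x.2.1, x.1.2), (x.1.1, x.2.2)))
    (Function.Involutive.bijective fun _ => rfl) _ _ fun _ => rfl

section TensorExt

variable {d k : ℕ} {T : Matrix (Fin d) (Fin d) ℂ → Matrix (Fin d) (Fin d) ℂ}

theorem trace_tensorExt (hT : ∀ X, (T X).trace = X.trace)
    (Z : Matrix (Fin d × Fin k) (Fin d × Fin k) ℂ) : (tensorExt T Z).trace = Z.trace := by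
  have hblock := fun j => hT (fun a b => Z (a, j) (b, j))
  simp only [trace, diag] at hblock
  simp only [trace, diag, tensorExt, Fintype.sum_prod_type]
  rw [Finset.sum_comm, Finset.sum_congr rfl fun j _ => hblock j, Finset.sum_comm]

theorem isHermitian_tensorExt (hT : ∀ X, T Xᴴ = (T X)ᴴ)
    {Z : Matrix (Fin d × Fin k) (Fin d × Fin k) ℂ} (hZ : Z.IsHermitian) :
    (tensorExt T Z).IsHermitian := by
  ext p q
  set B : Matrix (Fin d) (Fin d) ℂ := fun a b => Z (a, p.2) (b, q.2)
  have hblock : (fun a b => Z (a, q.2) (b, p.2) : Matrix (Fin d) (Fin d) ℂ) = Bᴴ := by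
    ext a b
    exact (hZ.apply _ _).symm
  change star (T (fun a b => Z (a, q.2) (b, p.2) : Matrix _ _ ℂ) q.1 p.1) = T B p.1 q.1
  rw [hblock, hT, conjTranspose_apply, star_star]

end TensorExt

theorem ptransp_trace_norm_bound_general {d m : ℕ}
    (E : Fin m → Matrix (Fin d) (Fin d) ℂ) (hE : ∑ i, (E i)ᴴ * E i = 1)
    (T : Matrix (Fin d) (Fin d) ℂ → Matrix (Fin d) (Fin d) ℂ)
    (hT : ∀ X, T X = ∑ i, E i * X * (E i)ᴴ)
    (ρ : Matrix (Fin d × Fin d) (Fin d × Fin d) ℂ)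
    (hρ : ρ.PosSemidef) :
    traceNorm (ptransp (ρ - tensorExt T ρ)) ≤
      (d / Real.sqrt 2) * traceNorm (ρ - tensorExt T ρ) := by
  have hT_trace : ∀ X, (T X).trace = X.trace := fun X => by
    rw [hT, trace_sum_mul_mul_conjTranspose E hE]
  have hT_herm : ∀ X, T Xᴴ = (T X)ᴴ := fun X => by
    rw [hT, hT, sum_mul_conjTranspose_mul_conjTranspose]
  set Δ := ρ - tensorExt T ρ
  have hΔ : Δ.IsHermitian := hρ.1.sub (isHermitian_tensorExt hT_herm hρ.1)
  have hΔ_trace : Δ.trace = 0 := by rw [trace_sub, trace_tensorExt hT_trace, sub_self]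
  calc traceNorm (ptransp Δ) ≤ √(Fintype.card (Fin d × Fin d)) * hsNorm (ptransp Δ) :=
        traceNorm_le_sqrt_card_mul_hsNorm _
    _ = d * hsNorm Δ := by
        rw [hsNorm_ptransp, Fintype.card_prod, Fintype.card_fin, Nat.cast_mul,
          Real.sqrt_mul_self (Nat.cast_nonneg d)]
    _ ≤ d * (traceNorm Δ / √2) := by
        gcongr
        exact hΔ.hsNorm_le_traceNorm_div_sqrt_two hΔ_trace
    _ = (d / Real.sqrt 2) * traceNorm Δ := by ring

theorem ptransp_trace_norm_bound {d m : ℕ}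
    (E : Fin m → Matrix (Fin d) (Fin d) ℂ) (hE : ∑ i, (E i)ᴴ * E i = 1)
    (T : Matrix (Fin d) (Fin d) ℂ → Matrix (Fin d) (Fin d) ℂ)
    (hT : ∀ X, T X = ∑ i, E i * X * (E i)ᴴ)
    (ρ : Matrix (Fin d × Fin d) (Fin d × Fin d) ℂ)
    (hρ : ρ.PosSemidef) (hρ1 : ρ.trace = 1) :
    traceNorm (ptransp (ρ - tensorExt T ρ)) ≤
      (d / Real.sqrt 2) * traceNorm (ρ - tensorExt T ρ) :=
  ptransp_trace_norm_bound_general E hE T hT ρ hρ
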